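/- If G is a d-regular graph with d ≥ 7 containing neither a cycle of length 4 nor a cycle of length 6, then the b-chromatic number of G equals d + 1. -/

import Mathlib

open SimpleGraph

variable {V : Type*} [Fintype V] [DecidableEq V]

/-- In a proper coloring `c` with `k` colors, a vertex is dominant if it has a
neighbor in every color class other than its own. -/
def IsDominant {k : ℕ} (G : SimpleGraph V) (c : V → Fin k) (v : V) : Prop :=
  ∀ j : Fin k, j ≠ c v → ∃ u, G.Adj v u ∧ c u = j

/-- `c` is a proper coloring. -/
def ProperColoring {k : ℕ} (G : SimpleGraph V) (c : V → Fin k) : Prop :=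
  ∀ u v, G.Adj u v → c u ≠ c v

/-- A b-coloring: proper, and every color class contains a dominant vertex. -/
def IsBColoring {k : ℕ} (G : SimpleGraph V) (c : V → Fin k) : Prop :=
  ProperColoring G c ∧ ∀ j : Fin k, ∃ v, c v = j ∧ IsDominant G c v

/-- The b-chromatic number: largest `k` admitting a b-coloring with `k` colors. -/
noncomputable def bNum (G : SimpleGraph V) : ℕ :=
  sSup {k | ∃ c : V → Fin k, IsBColoring G c}

/-- Number of colors possessing a dominant vertex in the coloring `c`. -/
noncomputable def domColors {k : ℕ} (G : SimpleGraph V) (c : V → Fin k) : ℕ :=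
  Nat.card {j : Fin k // ∃ v, c v = j ∧ IsDominant G c v}

/-- The f-chromatic vertex number of a d-regular graph: the maximum number of
colors having a dominant vertex, over proper (d+1)-colorings. -/
noncomputable def fNum (G : SimpleGraph V) (d : ℕ) : ℕ :=
  sSup {m | ∃ c : V → Fin (d+1), ProperColoring G c ∧ m = domColors G c}

/-- `G` contains no cycle of length `n`. -/
def NoCycleOfLength (G : SimpleGraph V) (n : ℕ) : Prop :=
  ∀ (v : V) (w : G.Walk v v), w.IsCycle → w.length ≠ n

/-- `⌈n/2⌉` for a natural number `n`. -/
def ceilHalf (n : ℕ) : ℕ := (n + 1) / 2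

/-!
The upper bound holds in every `d`-regular graph: a dominant vertex sees the `k - 1` colours other
than its own among its `d` neighbours.

For the lower bound fix a vertex `v`. We colour the ball of radius two around `v` so that `v` and
its `d` neighbours become dominant vertices of `d + 1` distinct colours, and then colour the other
vertices greedily. The closed neighbourhood `N[v]` is made rainbow; then the neighbours `x` of `v`
are processed one at a time, and the far neighbours of `x` (its neighbours outside `N[v]`) receive
distinct colours not used on `N[x] ∩ N[v]`. Without 4-cycles the far neighbourhoods are disjoint
and have at least `d - 2` elements; without 4- and 6-cycles, a vertex outside `N[v]` has at most
one neighbour at distance two from `v`. Hence each far neighbour of `x` has at most one colour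
excluded by the earlier steps, and Hall's theorem applies unless one colour is excluded at all of
them. In that case a counting argument, valid for `d ≥ 5`, finds a vertex whose colour can be
traded with that of a blocking vertex, after which Hall's condition holds.
-/

set_option linter.unusedSectionVars false

open Finset SimpleGraph

theorem Finset.exists_injective_mem_sdiff {ι β : Type*} [DecidableEq β] (s : Finset ι)
    (t : Finset β) (f : ι → Finset β) (hcard : #s ≤ #t) (hf : ∀ i ∈ s, #(f i) ≤ 1)
    (hcover : ∀ b ∈ t, ∃ i ∈ s, b ∉ f i) :
    ∃ σ : s → β, Function.Injective σ ∧ ∀ i : s, σ i ∈ t \ f i := by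
  classical
  refine (all_card_le_biUnion_card_iff_exists_injective fun i : s => t \ f i).1 fun u => ?_
  rcases u.eq_empty_or_nonempty with rfl | ⟨i₀, hi₀⟩
  · simp
  by_cases hu : u = univ
  · subst hu
    calc #(univ : Finset s) = #s := by simp
      _ ≤ #t := hcard
      _ ≤ _ := card_le_card fun b hb => by
          obtain ⟨i, hi, hbi⟩ := hcover b hb
          exact mem_biUnion.2 ⟨⟨i, hi⟩, mem_univ _, mem_sdiff.2 ⟨hb, hbi⟩⟩
  · have hlt : #u < #s := by simpa using card_lt_card (ssubset_univ_iff.2 hu)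
    have hsdiff := le_card_sdiff (f i₀) t
    have hfi₀ := hf i₀ i₀.2
    calc #u ≤ #(t \ f i₀) := by omega
      _ ≤ _ := card_le_card (subset_biUnion_of_mem (fun i : s => t \ f i) hi₀)

section Cycles

variable {G : SimpleGraph V} {a b c e f g : V}

theorem NoCycleOfLength.eq_of_square (h4 : NoCycleOfLength G 4) (hab : G.Adj a b)
    (hbc : G.Adj b c) (hce : G.Adj c e) (hea : G.Adj e a) (hac : a ≠ c) : b = e := by
  by_contra hbe
  refine h4 a (.cons hab (.cons hbc (.cons hce (.cons hea .nil)))) ?_ rfl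
  simp [Walk.isCycle_def, Walk.isTrail_def, List.Nodup, hab.ne, hab.ne', hbc.ne, hce.ne, hea.ne,
    hea.ne', hac, hac.symm, hbe]

theorem NoCycleOfLength.not_hexagon (h6 : NoCycleOfLength G 6) (hab : G.Adj a b)
    (hbc : G.Adj b c) (hce : G.Adj c e) (hef : G.Adj e f) (hfg : G.Adj f g) (hga : G.Adj g a)
    (hac : a ≠ c) (hae : a ≠ e) (haf : a ≠ f) (hbe : b ≠ e) (hbf : b ≠ f) (hbg : b ≠ g)
    (hcf : c ≠ f) (hcg : c ≠ g) (heg : e ≠ g) : False := by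
  refine h6 a (.cons hab (.cons hbc (.cons hce (.cons hef (.cons hfg (.cons hga .nil)))))) ?_ rfl
  simp [Walk.isCycle_def, Walk.isTrail_def, List.Nodup, hab.ne, hab.ne', hbc.ne, hce.ne, hef.ne,
    hfg.ne, hga.ne, hga.ne', hac, hac.symm, hae, hae.symm, haf, haf.symm, hbe, hbf, hbg, hcf, hcg,
    heg]

end Cycles

section Dominance

variable {G : SimpleGraph V} [DecidableRel G.Adj] {k : ℕ} {c : V → Fin k} {w : V}

theorem IsDominant.le_degree_add_one (h : IsDominant G c w) : k ≤ G.degree w + 1 := by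
  have hsub : univ.erase (c w) ⊆ (G.neighborFinset w).image c := fun j hj => by
    obtain ⟨u, hu, rfl⟩ := h j (mem_erase.1 hj).1
    exact mem_image.2 ⟨u, (mem_neighborFinset _ _ _).2 hu, rfl⟩
  have hcard := (card_le_card hsub).trans card_image_le
  rw [card_erase_of_mem (mem_univ _), card_univ, Fintype.card_fin,
    card_neighborFinset_eq_degree] at hcard
  omega

theorem IsBColoring.le_of_isRegularOfDegree {d : ℕ} (hc : IsBColoring G c)
    (hreg : G.IsRegularOfDegree d) : k ≤ d + 1 := by
  rcases Nat.eq_zero_or_pos k with rfl | hk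
  · omega
  obtain ⟨w, -, hw⟩ := hc.2 ⟨0, hk⟩
  simpa [hreg w] using hw.le_degree_add_one

theorem isDominant_of_injOn (hc : ProperColoring G c)
    (hinj : Set.InjOn c (G.neighborFinset w)) (hk : G.degree w + 1 = k) : IsDominant G c w := by
  have himage : (G.neighborFinset w).image c = univ.erase (c w) := by
    refine eq_of_subset_of_card_le (fun j hj => ?_) ?_
    · obtain ⟨u, hu, rfl⟩ := mem_image.1 hj
      exact mem_erase.2 ⟨(hc w u ((mem_neighborFinset _ _ _).1 hu)).symm, mem_univ _⟩
    · rw [card_image_of_injOn hinj, card_erase_of_mem (mem_univ _), card_univ, Fintype.card_fin,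
        card_neighborFinset_eq_degree]
      omega
  intro j hj
  obtain ⟨u, hu, rfl⟩ := mem_image.1 (himage ▸ mem_erase.2 ⟨hj, mem_univ j⟩)
  exact ⟨u, (mem_neighborFinset _ _ _).1 hu, rfl⟩

theorem exists_properColoring_of_properOn_compl (hdeg : ∀ w, G.degree w < k) (T : Finset V)
    (c : V → Fin k) (hc : ∀ a ∉ T, ∀ b ∉ T, G.Adj a b → c a ≠ c b) :
    ∃ c' : V → Fin k, ProperColoring G c' ∧ ∀ w ∉ T, c' w = c w := by
  induction T using Finset.induction_on generalizing c with
  | empty => exact ⟨c, fun a b => hc a (notMem_empty a) b (notMem_empty b), fun _ _ => rfl⟩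
  | insert a T haT ih =>
    obtain ⟨col, -, hcol⟩ : ∃ col ∈ univ, col ∉ (G.neighborFinset a \ T).image c := by
      refine exists_mem_notMem_of_card_lt_card (card_image_le.trans_lt ?_)
      rw [card_univ, Fintype.card_fin]
      exact (card_le_card sdiff_subset).trans_lt (G.card_neighborFinset_eq_degree a ▸ hdeg a)
    have hcol' : ∀ q ∉ T, G.Adj a q → col ≠ c q := fun q hq haq h =>
      hcol (mem_image.2 ⟨q, mem_sdiff.2 ⟨(mem_neighborFinset _ _ _).2 haq, hq⟩, h.symm⟩)
    obtain ⟨c', hc', hc'eq⟩ := ih (Function.update c a col) fun p hp q hq hpq => by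
      rcases eq_or_ne p a with rfl | hpa
      · rw [Function.update_self, Function.update_of_ne hpq.ne']
        exact hcol' q hq hpq
      rcases eq_or_ne q a with rfl | hqa
      · rw [Function.update_self, Function.update_of_ne hpa]
        exact (hcol' p hp hpq.symm).symm
      rw [Function.update_of_ne hpa, Function.update_of_ne hqa]
      exact hc p (by simp [hpa, hp]) q (by simp [hqa, hq]) hpq
    refine ⟨c', hc', fun w hw => ?_⟩
    rw [hc'eq w fun h => hw (mem_insert_of_mem h),
      Function.update_of_ne fun h => hw (by simp [h])]

end Dominance

namespace SimpleGraph

variable {G : SimpleGraph V} [DecidableRel G.Adj] {d : ℕ} {v x y w : V}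

variable (G) in
def farNeighborFinset (v x : V) : Finset V :=
  G.neighborFinset x \ insert v (G.neighborFinset v)

variable (G) in
def farNeighbors (v : V) (S : Finset V) : Finset V :=
  S.biUnion (G.farNeighborFinset v)

theorem mem_farNeighborFinset :
    w ∈ G.farNeighborFinset v x ↔ G.Adj x w ∧ w ≠ v ∧ ¬G.Adj v w := by
  simp [farNeighborFinset]

theorem notMem_closedNbhd_of_mem_farNeighborFinset (hw : w ∈ G.farNeighborFinset v x) :
    w ∉ insert v (G.neighborFinset v) :=
  (mem_sdiff.1 hw).2

theorem mem_farNeighbors {S : Finset V} :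
    w ∈ G.farNeighbors v S ↔ ∃ x ∈ S, w ∈ G.farNeighborFinset v x :=
  mem_biUnion

theorem farNeighbors_mono {S T : Finset V} (h : S ⊆ T) : G.farNeighbors v S ⊆ G.farNeighbors v T :=
  biUnion_subset_biUnion_of_subset_left _ h

theorem eq_of_adj_of_mem_farNeighborFinset (h4 : NoCycleOfLength G 4) (hy : G.Adj v y)
    (hx : G.Adj v x) (hw : w ∈ G.farNeighborFinset v y) (hxw : G.Adj x w) : x = y := by
  rw [mem_farNeighborFinset] at hw
  exact h4.eq_of_square hx hxw hw.1.symm hy.symm hw.2.1.symm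

theorem disjoint_farNeighborFinset (h4 : NoCycleOfLength G 4) (hx : G.Adj v x) (hy : G.Adj v y)
    (hxy : x ≠ y) : Disjoint (G.farNeighborFinset v x) (G.farNeighborFinset v y) := by
  rw [Finset.disjoint_left]
  intro w hwx hwy
  exact hxy (eq_of_adj_of_mem_farNeighborFinset h4 hy hx hwy (mem_farNeighborFinset.1 hwx).1)

theorem mapsTo_swap_farNeighborFinset (h4 : NoCycleOfLength G 4) {z a b : V} (hy : G.Adj v y)
    (hz : G.Adj v z) (ha : a ∈ G.farNeighborFinset v y) (hb : b ∈ G.farNeighborFinset v y) :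
    Set.MapsTo (Equiv.swap a b) (G.farNeighborFinset v z) (G.farNeighborFinset v z) := by
  intro w hw
  by_cases hwy : w ∈ G.farNeighborFinset v y
  · obtain rfl : z = y := by
      by_contra hzy
      exact Finset.disjoint_left.1 (disjoint_farNeighborFinset h4 hz hy hzy) hw hwy
    rw [mem_coe, Equiv.swap_apply_def]
    split_ifs <;> assumption
  · rwa [mem_coe, Equiv.swap_apply_of_ne_of_ne (fun h : w = a => hwy (h ▸ ha))
      fun h : w = b => hwy (h ▸ hb)]

theorem disjoint_farNeighbors (h4 : NoCycleOfLength G 4) {S : Finset V}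
    (hS : S ⊆ G.neighborFinset v) (hx : G.Adj v x) (hxS : x ∉ S) :
    Disjoint (G.farNeighborFinset v x) (G.farNeighbors v S) :=
  (disjoint_biUnion_right _ _ _).2 fun _ hy => disjoint_farNeighborFinset h4 hx
    ((mem_neighborFinset _ _ _).1 (hS hy)) fun h => hxS (h ▸ hy)

theorem card_inter_neighborFinset_le_one (h4 : NoCycleOfLength G 4) (hxv : x ≠ v) :
    #(G.neighborFinset x ∩ G.neighborFinset v) ≤ 1 := by
  refine card_le_one.2 fun a ha b hb => ?_
  simp only [mem_inter, mem_neighborFinset] at ha hb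
  exact h4.eq_of_square ha.1 ha.2.symm hb.2 hb.1.symm hxv

theorem card_farNeighborFinset_add (hreg : G.IsRegularOfDegree d) (hx : G.Adj v x) :
    #(G.farNeighborFinset v x) + #(G.neighborFinset x ∩ G.neighborFinset v) + 1 = d := by
  have hsplit := card_sdiff_add_card_inter (G.neighborFinset x) (insert v (G.neighborFinset v))
  rw [inter_insert_of_mem ((mem_neighborFinset _ _ _).2 hx.symm), card_insert_of_notMem (by simp),
    card_neighborFinset_eq_degree, hreg x] at hsplit
  simpa [farNeighborFinset, add_assoc] using hsplit

theorem le_card_farNeighborFinset (hreg : G.IsRegularOfDegree d) (h4 : NoCycleOfLength G 4)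
    (hx : G.Adj v x) : d - 2 ≤ #(G.farNeighborFinset v x) := by
  have := card_farNeighborFinset_add hreg hx
  have := card_inter_neighborFinset_le_one h4 hx.ne'
  omega

theorem eq_of_adj_of_adj_of_mem_farNeighbors (h4 : NoCycleOfLength G 4)
    (h6 : NoCycleOfLength G 6) {S : Finset V} (hS : S ⊆ G.neighborFinset v)
    (hw : w ∉ insert v (G.neighborFinset v)) {a b : V} (ha : a ∈ G.farNeighbors v S)
    (hb : b ∈ G.farNeighbors v S) (hwa : G.Adj w a) (hwb : G.Adj w b) : a = b := by
  obtain ⟨y, hy, ha⟩ := mem_farNeighbors.1 ha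
  obtain ⟨z, hz, hb⟩ := mem_farNeighbors.1 hb
  replace hy := (mem_neighborFinset _ _ _).1 (hS hy)
  replace hz := (mem_neighborFinset _ _ _).1 (hS hz)
  rw [mem_farNeighborFinset] at ha hb
  simp only [mem_insert, mem_neighborFinset, not_or] at hw
  have hwy : w ≠ y := fun h => hw.2 (h ▸ hy)
  by_contra hab
  obtain rfl | hyz := eq_or_ne y z
  · exact hab (h4.eq_of_square hwa ha.1.symm hb.1 hwb.symm hwy)
  · exact h6.not_hexagon hy ha.1 hwa.symm hwb hb.1.symm hz.symm ha.2.1.symm (Ne.symm hw.1)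
      hb.2.1.symm hwy.symm (fun h => hb.2.2 (h ▸ hy)) hyz hab (fun h => ha.2.2 (h ▸ hz))
      fun h => hw.2 (h ▸ hz)

section PartialColoring

variable {α : Type*} [Fintype α] [DecidableEq α] {S : Finset V} {c : V → α}

variable (G) in
def allowedColors (c : V → α) (v x : V) : Finset α :=
  univ \ (insert x (insert v (G.neighborFinset x ∩ G.neighborFinset v))).image c

theorem apply_notMem_allowedColors {q : V}
    (hq : q ∈ insert x (insert v (G.neighborFinset x ∩ G.neighborFinset v))) :
    c q ∉ G.allowedColors c v x :=
  fun h => (mem_sdiff.1 h).2 (mem_image_of_mem c hq)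

theorem allowedColors_congr {c' : V → α} (hx : G.Adj v x)
    (h : ∀ w ∈ insert v (G.neighborFinset v), c' w = c w) :
    G.allowedColors c' v x = G.allowedColors c v x := by
  rw [allowedColors, allowedColors, image_congr fun q hq => h q ?_]
  simp only [coe_insert, coe_inter, Set.mem_insert_iff, Set.mem_inter_iff, mem_coe,
    mem_neighborFinset] at hq
  rcases hq with rfl | rfl | ⟨-, hq⟩ <;> simp [*]

variable (G) in
/-- A colouring of the ball of radius two around `v` on its way to a b-colouring whose dominant
vertices are `v` and its neighbours, once every neighbour of `v` has been processed (put in `S`). -/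
structure IsPartialBColoring (v : V) (S : Finset V) (c : V → α) : Prop where
  injOn_closedNbhd : Set.InjOn c (insert v (G.neighborFinset v) : Finset V)
  injOn_far : ∀ x ∈ S, Set.InjOn c (G.farNeighborFinset v x)
  mem_allowedColors : ∀ x ∈ S, ∀ w ∈ G.farNeighborFinset v x, c w ∈ G.allowedColors c v x
  ne_of_adj : ∀ a ∈ G.farNeighbors v S, ∀ b ∈ G.farNeighbors v S, G.Adj a b → c a ≠ c b

theorem card_farNeighborFinset_le_card_allowedColors (hα : d + 1 ≤ Fintype.card α)
    (hreg : G.IsRegularOfDegree d) (hx : G.Adj v x) (c : V → α) :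
    #(G.farNeighborFinset v x) ≤ #(G.allowedColors c v x) := by
  have hfixed : #((insert x (insert v (G.neighborFinset x ∩ G.neighborFinset v))).image c) ≤
      #(G.neighborFinset x ∩ G.neighborFinset v) + 2 :=
    card_image_le.trans ((card_insert_le _ _).trans (Nat.add_le_add_right (card_insert_le _ _) 1))
  have := card_farNeighborFinset_add hreg hx
  rw [allowedColors, card_univ_sdiff]
  exact le_trans (by omega) (Nat.sub_le_sub_left hfixed _)

theorem exists_isPartialBColoring_empty (hα : d + 1 ≤ Fintype.card α)
    (hreg : G.IsRegularOfDegree d) (v : V) : ∃ c : V → α, G.IsPartialBColoring v ∅ c := by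
  have hcard : Fintype.card (insert v (G.neighborFinset v) : Finset V) ≤ Fintype.card α := by
    rw [Fintype.card_coe, card_insert_of_notMem (by simp), card_neighborFinset_eq_degree, hreg v]
    exact hα
  have : Nonempty α := Fintype.card_pos_iff.1 (by omega)
  obtain ⟨c, hc⟩ := Set.exists_injOn_iff_injective.2
    ⟨_, (Function.Embedding.nonempty_of_card_le hcard).some.injective⟩
  exact ⟨c, hc, by simp, by simp, by simp [farNeighbors]⟩

namespace IsPartialBColoring

theorem extend (hc : G.IsPartialBColoring v S c) (h4 : NoCycleOfLength G 4)
    (hS : S ⊆ G.neighborFinset v) (hx : G.Adj v x) (hxS : x ∉ S) {c' : V → α}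
    (heq : ∀ w ∉ G.farNeighborFinset v x, c' w = c w)
    (hinj : Set.InjOn c' (G.farNeighborFinset v x))
    (hmem : ∀ w ∈ G.farNeighborFinset v x, c' w ∈ G.allowedColors c v x)
    (hne : ∀ w ∈ G.farNeighborFinset v x, ∀ t ∈ G.farNeighbors v S, G.Adj w t → c' w ≠ c t) :
    G.IsPartialBColoring v (insert x S) c' := by
  have hclosed : ∀ w ∈ insert v (G.neighborFinset v), c' w = c w := fun w hw =>
    heq w fun h => notMem_closedNbhd_of_mem_farNeighborFinset h hw
  have hold : ∀ w ∈ G.farNeighbors v S, c' w = c w := fun w hw =>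
    heq w fun h => Finset.disjoint_left.1 (disjoint_farNeighbors h4 hS hx hxS) h hw
  have hallowed : ∀ y ∈ insert x S, G.allowedColors c' v y = G.allowedColors c v y := by
    intro y hy
    refine allowedColors_congr ?_ hclosed
    rcases mem_insert.1 hy with rfl | hy
    exacts [hx, (mem_neighborFinset _ _ _).1 (hS hy)]
  refine ⟨hc.injOn_closedNbhd.congr fun w hw => (hclosed w hw).symm, ?_, ?_, ?_⟩
  · intro y hy
    rcases mem_insert.1 hy with rfl | hy
    · exact hinj
    · exact (hc.injOn_far y hy).congr fun w hw =>
        (hold w (mem_farNeighbors.2 ⟨y, hy, hw⟩)).symm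
  · intro y hy w hw
    rw [hallowed y hy]
    rcases mem_insert.1 hy with rfl | hy
    · exact hmem w hw
    · rw [hold w (mem_farNeighbors.2 ⟨y, hy, hw⟩)]
      exact hc.mem_allowedColors y hy w hw
  · simp only [farNeighbors, biUnion_insert, mem_union]
    rintro a (ha | ha) b (hb | hb) hab
    · exact (hinj.ne_iff ha hb).2 hab.ne
    · rw [hold b hb]
      exact hne a ha b hb hab
    · rw [hold a ha]
      exact (hne b hb a ha hab.symm).symm
    · rw [hold a ha, hold b hb]
      exact hc.ne_of_adj a ha b hb hab

theorem comp_swap (hc : G.IsPartialBColoring v S c) (h4 : NoCycleOfLength G 4)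
    (hS : S ⊆ G.neighborFinset v) (hy : y ∈ S) {a b : V} (ha : a ∈ G.farNeighborFinset v y)
    (hb : b ∈ G.farNeighborFinset v y)
    (hac : ∀ t ∈ G.farNeighbors v S \ G.farNeighborFinset v y, G.Adj a t → c b ≠ c t)
    (hbc : ∀ t ∈ G.farNeighbors v S \ G.farNeighborFinset v y, G.Adj b t → c a ≠ c t) :
    G.IsPartialBColoring v S (c ∘ Equiv.swap a b) := by
  have hSadj : ∀ z ∈ S, G.Adj v z := fun z hz => (mem_neighborFinset _ _ _).1 (hS hz)
  have hfix : ∀ w ∉ G.farNeighborFinset v y, Equiv.swap a b w = w := fun w hw =>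
    Equiv.swap_apply_of_ne_of_ne (fun h => hw (h ▸ ha)) (fun h => hw (h ▸ hb))
  have hclosed : ∀ w ∈ insert v (G.neighborFinset v), (c ∘ Equiv.swap a b) w = c w :=
    fun w hw => congrArg c (hfix w fun h => notMem_closedNbhd_of_mem_farNeighborFinset h hw)
  have hmaps : ∀ z ∈ S, Set.MapsTo (Equiv.swap a b) (G.farNeighborFinset v z)
      (G.farNeighborFinset v z) := fun z hz =>
    mapsTo_swap_farNeighborFinset h4 (hSadj y hy) (hSadj z hz) ha hb
  refine ⟨hc.injOn_closedNbhd.congr fun w hw => (hclosed w hw).symm,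
    fun z hz => (hc.injOn_far z hz).comp (Equiv.injective _).injOn (hmaps z hz),
    fun z hz w hw => ?_, fun p hp q hq hpq => ?_⟩
  · rw [allowedColors_congr (hSadj z hz) hclosed]
    exact hc.mem_allowedColors z hz _ (hmaps z hz hw)
  have hswap : ∀ p ∈ G.farNeighbors v S,
      ∀ q ∈ G.farNeighbors v S \ G.farNeighborFinset v y, G.Adj p q →
        c (Equiv.swap a b p) ≠ c q := by
    intro p hp q hq hpq
    rw [Equiv.swap_apply_def]
    split_ifs with hpa hpb
    · exact hac q hq (hpa ▸ hpq)
    · exact hbc q hq (hpb ▸ hpq)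
    · exact hc.ne_of_adj p hp q (sdiff_subset hq) hpq
  simp only [Function.comp_apply]
  by_cases hpy : p ∈ G.farNeighborFinset v y
  · by_cases hqy : q ∈ G.farNeighborFinset v y
    · exact ((hc.injOn_far y hy).ne_iff (hmaps y hy hpy) (hmaps y hy hqy)).2
        ((Equiv.injective _).ne hpq.ne)
    · rw [hfix q hqy]
      exact hswap p hp q (mem_sdiff.2 ⟨hq, hqy⟩) hpq
  · rw [hfix p hpy]
    exact (hswap q hq p (mem_sdiff.2 ⟨hp, hpy⟩) hpq.symm).symm

theorem card_filter_farNeighbors_le (hc : G.IsPartialBColoring v S c) (col : α) :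
    #((G.farNeighbors v S).filter (c · = col)) ≤ #S := by
  rw [farNeighbors, filter_biUnion]
  simpa using card_biUnion_le_card_mul S _ 1 fun x hx => card_le_one.2 fun a ha b hb =>
    hc.injOn_far x hx (mem_filter.1 ha).1 (mem_filter.1 hb).1
      ((mem_filter.1 ha).2.trans (mem_filter.1 hb).2.symm)

/-- If the colour of `z₀` is blocked at every far neighbour of `x`, some other far neighbour of
`y` can trade colours with `z₀`: otherwise the `2d - 5` vertices of `U` below would each need a
neighbour of colour `c z₀` among the far neighbours of `S`, but there are at most `d - 1` such
vertices and each of them has only one neighbour in `U`. -/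
theorem exists_swap_partner (hc : G.IsPartialBColoring v S c) (hreg : G.IsRegularOfDegree d)
    (h4 : NoCycleOfLength G 4) (h6 : NoCycleOfLength G 6) (hd : 5 ≤ d)
    (hS : S ⊆ G.neighborFinset v) (hx : G.Adj v x) (hxS : x ∉ S) (hy : y ∈ S) {z₀ : V}
    (hz₀ : z₀ ∈ G.farNeighborFinset v y)
    (hblocked : ∀ w ∈ G.farNeighborFinset v x,
      ∃ t ∈ G.farNeighbors v S, G.Adj w t ∧ c t = c z₀) :
    ∃ b ∈ G.farNeighborFinset v y, b ≠ z₀ ∧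
      ∀ t ∈ G.farNeighbors v S \ G.farNeighborFinset v y, G.Adj b t → c z₀ ≠ c t := by
  by_contra! hno
  have hyadj : G.Adj v y := (mem_neighborFinset _ _ _).1 (hS hy)
  set U := G.farNeighborFinset v x ∪ (G.farNeighborFinset v y).erase z₀ with hU_def
  have hU : U ⊆ G.farNeighbors v (G.neighborFinset v) :=
    union_subset (subset_biUnion_of_mem _ ((mem_neighborFinset _ _ _).2 hx))
      ((erase_subset _ _).trans (subset_biUnion_of_mem _ (hS hy)))
  have hUZ : #U ≤ #((G.farNeighbors v S).filter (c · = c z₀)) := by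
    refine card_le_card_of_forall_subsingleton G.Adj (fun u hu => ?_)
      fun t ht u₁ hu₁ u₂ hu₂ => ?_
    · rcases mem_union.1 hu with hu | hu
      · obtain ⟨t, ht, hut, hct⟩ := hblocked u hu
        exact ⟨t, mem_filter.2 ⟨ht, hct⟩, hut⟩
      · obtain ⟨t, ht, hut, hct⟩ := hno u (mem_of_mem_erase hu) (ne_of_mem_erase hu)
        exact ⟨t, mem_filter.2 ⟨sdiff_subset ht, hct.symm⟩, hut⟩
    · obtain ⟨z, -, htz⟩ := mem_farNeighbors.1 (mem_filter.1 ht).1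
      exact eq_of_adj_of_adj_of_mem_farNeighbors h4 h6 subset_rfl
        (notMem_closedNbhd_of_mem_farNeighborFinset htz) (hU hu₁.1) (hU hu₂.1) hu₁.2.symm
        hu₂.2.symm
  have hcardU : #U = #(G.farNeighborFinset v x) + (#(G.farNeighborFinset v y) - 1) := by
    rw [hU_def, card_union_of_disjoint ((disjoint_farNeighborFinset h4 hx hyadj
      fun h => hxS (h ▸ hy)).mono_right (erase_subset _ _)), card_erase_of_mem hz₀]
  have hSd : #S ≤ d - 1 := by
    have hsub : S ⊆ (G.neighborFinset v).erase x :=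
      fun z hz => mem_erase.2 ⟨fun h => hxS (h ▸ hz), hS hz⟩
    simpa [card_erase_of_mem ((mem_neighborFinset _ _ _).2 hx), hreg v] using card_le_card hsub
  have := hc.card_filter_farNeighbors_le (c z₀)
  have := le_card_farNeighborFinset hreg h4 hx
  have := le_card_farNeighborFinset hreg h4 hyadj
  omega

/-- Swap the colours of `z₀` and its partner `b`: afterwards `w₀` only excludes the colour `c b`,
while another far neighbour `w₁` of `x` still only excludes the colour `c z₀`. -/
theorem exists_unblocked_of_blocked (hc : G.IsPartialBColoring v S c)
    (hreg : G.IsRegularOfDegree d) (h4 : NoCycleOfLength G 4) (h6 : NoCycleOfLength G 6)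
    (hd : 5 ≤ d) (hS : S ⊆ G.neighborFinset v) (hx : G.Adj v x) (hxS : x ∉ S) {col : α}
    (hblocked : ∀ w ∈ G.farNeighborFinset v x,
      ∃ t ∈ G.farNeighbors v S, G.Adj w t ∧ c t = col) :
    ∃ c₂ : V → α, G.IsPartialBColoring v S c₂ ∧ ∀ col, ∃ w ∈ G.farNeighborFinset v x,
      ∀ t ∈ G.farNeighbors v S, G.Adj w t → c₂ t ≠ col := by
  have htwo : 1 < #(G.farNeighborFinset v x) := by
    have := le_card_farNeighborFinset hreg h4 hx
    omega
  obtain ⟨w₀, hw₀, w₁, hw₁, hw₀₁⟩ := one_lt_card.1 htwo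
  obtain ⟨z₀, hz₀, hw₀z₀, rfl⟩ := hblocked w₀ hw₀
  obtain ⟨z₁, hz₁, hw₁z₁, hcz₁⟩ := hblocked w₁ hw₁
  obtain ⟨y, hy, hz₀y⟩ := mem_farNeighbors.1 hz₀
  obtain ⟨b, hb, hbz₀, hbfree⟩ :=
    hc.exists_swap_partner hreg h4 h6 hd hS hx hxS hy hz₀y hblocked
  have hw₀only : ∀ t ∈ G.farNeighbors v S, G.Adj w₀ t → t = z₀ := fun t ht h =>
    eq_of_adj_of_adj_of_mem_farNeighbors h4 h6 hS
      (notMem_closedNbhd_of_mem_farNeighborFinset hw₀) ht hz₀ h hw₀z₀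
  have hw₁only : ∀ t ∈ G.farNeighbors v S, G.Adj w₁ t → t = z₁ := fun t ht h =>
    eq_of_adj_of_adj_of_mem_farNeighbors h4 h6 hS
      (notMem_closedNbhd_of_mem_farNeighborFinset hw₁) ht hz₁ h hw₁z₁
  have hz₀only : ∀ t ∈ G.farNeighbors v (insert x S), G.Adj z₀ t → t = w₀ := fun t ht h =>
    eq_of_adj_of_adj_of_mem_farNeighbors h4 h6 (insert_subset ((mem_neighborFinset _ _ _).2 hx) hS)
      (notMem_closedNbhd_of_mem_farNeighborFinset hz₀y) ht
      (mem_farNeighbors.2 ⟨x, mem_insert_self x S, hw₀⟩) h hw₀z₀.symm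
  have hz₀S : ∀ t ∈ G.farNeighbors v S, ¬G.Adj z₀ t := fun t ht h =>
    Finset.disjoint_left.1 (disjoint_farNeighbors h4 hS hx hxS) hw₀
      (hz₀only t (farNeighbors_mono (subset_insert x S) ht) h ▸ ht)
  have hz₁z₀ : z₁ ≠ z₀ := fun h => hw₀₁ (hz₀only w₁
    (mem_farNeighbors.2 ⟨x, mem_insert_self x S, hw₁⟩) (h ▸ hw₁z₁.symm)).symm
  have hcb : c b ≠ c z₀ := ((hc.injOn_far y hy).ne_iff hb hz₀y).2 hbz₀
  have hz₁swap : c (Equiv.swap z₀ b z₁) = c z₀ := by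
    rcases eq_or_ne z₁ b with rfl | hz₁b
    · rw [Equiv.swap_apply_right]
    · rw [Equiv.swap_apply_of_ne_of_ne hz₁z₀ hz₁b, hcz₁]
  refine ⟨c ∘ Equiv.swap z₀ b, hc.comp_swap h4 hS hy hz₀y hb
    (fun t ht h => (hz₀S t (sdiff_subset ht) h).elim) hbfree, fun col => ?_⟩
  by_cases hcol : col = c b
  · refine ⟨w₁, hw₁, fun t ht h => ?_⟩
    rw [hw₁only t ht h, Function.comp_apply, hz₁swap, hcol]
    exact hcb.symm
  · refine ⟨w₀, hw₀, fun t ht h => ?_⟩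
    rw [hw₀only t ht h, Function.comp_apply, Equiv.swap_apply_left]
    exact Ne.symm hcol

theorem exists_unblocked (hc : G.IsPartialBColoring v S c) (hreg : G.IsRegularOfDegree d)
    (h4 : NoCycleOfLength G 4) (h6 : NoCycleOfLength G 6) (hd : 5 ≤ d)
    (hS : S ⊆ G.neighborFinset v) (hx : G.Adj v x) (hxS : x ∉ S) :
    ∃ c₂ : V → α, G.IsPartialBColoring v S c₂ ∧ ∀ col, ∃ w ∈ G.farNeighborFinset v x,
      ∀ t ∈ G.farNeighbors v S, G.Adj w t → c₂ t ≠ col := by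
  by_cases hfree : ∀ col, ∃ w ∈ G.farNeighborFinset v x,
      ∀ t ∈ G.farNeighbors v S, G.Adj w t → c t ≠ col
  · exact ⟨c, hc, hfree⟩
  push Not at hfree
  obtain ⟨col, hblocked⟩ := hfree
  exact hc.exists_unblocked_of_blocked hreg h4 h6 hd hS hx hxS hblocked

theorem exists_insert (hc : G.IsPartialBColoring v S c) (hα : d + 1 ≤ Fintype.card α)
    (hreg : G.IsRegularOfDegree d) (h4 : NoCycleOfLength G 4) (h6 : NoCycleOfLength G 6)
    (hd : 5 ≤ d) (hS : S ⊆ G.neighborFinset v) (hx : G.Adj v x) (hxS : x ∉ S) :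
    ∃ c' : V → α, G.IsPartialBColoring v (insert x S) c' := by
  obtain ⟨c₂, hc₂, hfree⟩ := hc.exists_unblocked hreg h4 h6 hd hS hx hxS
  obtain ⟨σ, hσ, hσmem⟩ := exists_injective_mem_sdiff (G.farNeighborFinset v x)
    (G.allowedColors c₂ v x) (fun w => (G.neighborFinset w ∩ G.farNeighbors v S).image c₂)
    (card_farNeighborFinset_le_card_allowedColors hα hreg hx c₂)
    (fun w hw => card_image_le.trans <| card_le_one.2 fun a ha b hb => by
      simp only [mem_inter, mem_neighborFinset] at ha hb
      exact eq_of_adj_of_adj_of_mem_farNeighbors h4 h6 hS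
        (notMem_closedNbhd_of_mem_farNeighborFinset hw) ha.2 hb.2 ha.1 hb.1)
    (fun col _ => by
      obtain ⟨w, hw, hwcol⟩ := hfree col
      refine ⟨w, hw, fun hcol => ?_⟩
      obtain ⟨t, ht, rfl⟩ := mem_image.1 hcol
      simp only [mem_inter, mem_neighborFinset] at ht
      exact hwcol t ht.2 ht.1 rfl)
  refine ⟨fun w => if hw : w ∈ G.farNeighborFinset v x then σ ⟨w, hw⟩ else c₂ w,
    hc₂.extend h4 hS hx hxS (fun w hw => dif_neg hw) (fun a ha b hb hab => ?_)
    (fun w hw => ?_) (fun w hw t ht hwt => ?_)⟩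
  · simp only [dif_pos (mem_coe.1 ha), dif_pos (mem_coe.1 hb)] at hab
    exact congrArg Subtype.val (hσ hab)
  · rw [dif_pos hw]
    exact (mem_sdiff.1 (hσmem _)).1
  · rw [dif_pos hw]
    intro h
    exact (mem_sdiff.1 (hσmem ⟨w, hw⟩)).2
      (mem_image.2 ⟨t, mem_inter.2 ⟨(mem_neighborFinset _ _ _).2 hwt, ht⟩, h.symm⟩)

end IsPartialBColoring

theorem exists_isPartialBColoring (hα : d + 1 ≤ Fintype.card α) (hreg : G.IsRegularOfDegree d)
    (h4 : NoCycleOfLength G 4) (h6 : NoCycleOfLength G 6) (hd : 5 ≤ d) (v : V) :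
    ∃ c : V → α, G.IsPartialBColoring v (G.neighborFinset v) c :=
  Finset.induction_on' (motive := fun S => ∃ c : V → α, G.IsPartialBColoring v S c) _
    (exists_isPartialBColoring_empty hα hreg v) fun _ _ hx hS hxS ⟨_, hc⟩ =>
      hc.exists_insert hα hreg h4 h6 hd hS ((mem_neighborFinset _ _ _).1 hx) hxS

variable (G) in
def closedBallTwo (v : V) : Finset V :=
  insert v (G.neighborFinset v) ∪ G.farNeighbors v (G.neighborFinset v)

namespace IsPartialBColoring

theorem ne_of_adj_of_mem_closedBallTwo (hc : G.IsPartialBColoring v (G.neighborFinset v) c) :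
    ∀ a ∈ G.closedBallTwo v, ∀ b ∈ G.closedBallTwo v, G.Adj a b → c a ≠ c b := by
  have hmixed : ∀ a ∈ insert v (G.neighborFinset v),
      ∀ b ∈ G.farNeighbors v (G.neighborFinset v), G.Adj a b → c a ≠ c b := by
    intro a ha b hb hab h
    obtain ⟨y, -, hby⟩ := mem_farNeighbors.1 hb
    rcases mem_insert.1 ha with rfl | ha
    · exact (mem_farNeighborFinset.1 hby).2.2 hab
    · have hba : b ∈ G.farNeighborFinset v a := mem_sdiff.2
        ⟨(mem_neighborFinset _ _ _).2 hab, notMem_closedNbhd_of_mem_farNeighborFinset hby⟩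
      exact apply_notMem_allowedColors (mem_insert_self a _)
        (h ▸ hc.mem_allowedColors a ha b hba)
  intro a ha b hb hab
  rcases mem_union.1 ha with ha | ha <;> rcases mem_union.1 hb with hb | hb
  · exact (hc.injOn_closedNbhd.ne_iff ha hb).2 hab.ne
  · exact hmixed a ha b hb hab
  · exact (hmixed b hb a ha hab.symm).symm
  · exact hc.ne_of_adj a ha b hb hab

theorem injOn_neighborFinset (hc : G.IsPartialBColoring v S c) (hxS : x ∈ S) :
    Set.InjOn c (G.neighborFinset x) := by
  have hsplit : ∀ p ∈ G.neighborFinset x,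
      p ∈ insert v (G.neighborFinset v) ∨ p ∈ G.farNeighborFinset v x := fun p hp => by
    by_cases h : p ∈ insert v (G.neighborFinset v)
    exacts [Or.inl h, Or.inr (mem_sdiff.2 ⟨hp, h⟩)]
  have hmixed : ∀ p ∈ G.neighborFinset x, p ∈ insert v (G.neighborFinset v) →
      ∀ q ∈ G.farNeighborFinset v x, c p ≠ c q := by
    intro p hp hpv q hq h
    refine apply_notMem_allowedColors ?_ (h ▸ hc.mem_allowedColors x hxS q hq)
    rcases mem_insert.1 hpv with rfl | hpv
    · exact mem_insert_of_mem (mem_insert_self p _)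
    · exact mem_insert_of_mem (mem_insert_of_mem (mem_inter.2 ⟨hp, hpv⟩))
  intro p hp q hq hpq
  rcases hsplit p hp with hp' | hp' <;> rcases hsplit q hq with hq' | hq'
  · exact hc.injOn_closedNbhd hp' hq' hpq
  · exact absurd hpq (hmixed p hp hp' q hq')
  · exact absurd hpq.symm (hmixed q hq hq' p hp')
  · exact hc.injOn_far x hxS hp' hq' hpq

theorem isBColoring {c : V → Fin (d + 1)} (hc : G.IsPartialBColoring v (G.neighborFinset v) c)
    (hreg : G.IsRegularOfDegree d) {c' : V → Fin (d + 1)} (hc' : ProperColoring G c')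
    (heq : ∀ w ∈ G.closedBallTwo v, c' w = c w) : IsBColoring G c' := by
  have hclosed : insert v (G.neighborFinset v) ⊆ G.closedBallTwo v := subset_union_left
  have hinj : Set.InjOn c' (insert v (G.neighborFinset v) : Finset V) :=
    hc.injOn_closedNbhd.congr fun w hw => (heq w (hclosed hw)).symm
  have himage : (insert v (G.neighborFinset v)).image c' = univ := by
    refine eq_univ_of_card _ ?_
    rw [card_image_of_injOn hinj, card_insert_of_notMem (by simp), card_neighborFinset_eq_degree,
      hreg v, Fintype.card_fin]
  refine ⟨hc', fun j => ?_⟩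
  obtain ⟨w, hw, rfl⟩ := mem_image.1 (himage ▸ mem_univ j)
  refine ⟨w, rfl, isDominant_of_injOn hc' ?_ (by rw [hreg w])⟩
  rcases mem_insert.1 hw with rfl | hw
  · exact hinj.mono (by simp)
  · refine (hc.injOn_neighborFinset hw).congr fun p hp => (heq p ?_).symm
    by_cases h : p ∈ insert v (G.neighborFinset v)
    · exact hclosed h
    · exact mem_union_right _ (mem_biUnion.2 ⟨w, hw, mem_sdiff.2 ⟨hp, h⟩⟩)

end IsPartialBColoring

end PartialColoring

theorem exists_isBColoring (hreg : G.IsRegularOfDegree d) (h4 : NoCycleOfLength G 4)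
    (h6 : NoCycleOfLength G 6) (hd : 5 ≤ d) (v : V) : ∃ c : V → Fin (d + 1), IsBColoring G c := by
  obtain ⟨c, hc⟩ := exists_isPartialBColoring (α := Fin (d + 1)) (by simp) hreg h4 h6 hd v
  obtain ⟨c', hc', heq⟩ :=
    exists_properColoring_of_properOn_compl (fun w => (hreg w).trans_lt d.lt_succ_self)
    (univ \ G.closedBallTwo v) c (by simpa using hc.ne_of_adj_of_mem_closedBallTwo)
  exact ⟨c', hc.isBColoring hreg hc' fun w hw => heq w (by simp [hw])⟩

end SimpleGraph

theorem bNum_eq_of_no_C4_C6 (G : SimpleGraph V) [Nonempty V] [DecidableRel G.Adj]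
    (d : ℕ) (hd : 7 ≤ d) (hreg : G.IsRegularOfDegree d)
    (h4 : NoCycleOfLength G 4) (h6 : NoCycleOfLength G 6) :
    bNum G = d + 1 := by
  obtain ⟨c, hc⟩ := exists_isBColoring hreg h4 h6 (by omega) (Classical.arbitrary V)
  exact IsGreatest.csSup_eq ⟨⟨c, hc⟩, fun k ⟨_, hk⟩ => hk.le_of_isRegularOfDegree hreg⟩
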